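/- arXiv:2406.11166 — 3 statements merged into one kernel-verified Lean document; each statement's English description precedes it below -/
import Mathlib

section
/- Suppose each expert i ∈ N = {1,...,n} has a Bewley preference ≻ᵢ with representation (u, Cᵢ), and the decision maker's relation ≻₀ is either a hope-and-prepare preference with concordant representation (u, C₀, C₀) or a Bewley preference with representation (u, C₀), with the same u. Then the Pareto condition holds if and only if C₀ ⊆ co(⋃_{i=1}^n Cᵢ). -/
/-!
Framework: Anscombe–Aumann acts, finitely additive probability measures,
simple acts, hope-and-prepare preferences (Bastianello–Hill style setup).
-/

open Set

section Framework

variable (S : Type*) [MeasurableSpace S]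

/-- The measurable sets (events) of `S`, as a subtype. -/
abbrev MSet := {A : Set S // MeasurableSet A}

/-- Finitely additive probability measures on `(S, Σ)`, viewed as real-valued
set functions on events.  The weak* topology is the topology of pointwise
convergence on events, i.e. the product topology on `MSet S → ℝ`. -/
def ProbCharges : Set (MSet S → ℝ) :=
  {p | (∀ A, 0 ≤ p A) ∧ p ⟨Set.univ, MeasurableSet.univ⟩ = 1 ∧
    ∀ A B : MSet S, Disjoint A.1 B.1 → p ⟨A.1 ∪ B.1, A.2.union B.2⟩ = p A + p B}

end Framework

section Fns

variable {S : Type*} [MeasurableSpace S]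

/-- `φ : S → ℝ` is a measurable simple function (an element of `B₀(Σ)`). -/
def IsSimpleFn (φ : S → ℝ) : Prop :=
  (Set.range φ).Finite ∧ ∀ y : ℝ, MeasurableSet (φ ⁻¹' {y})

/-- The integral `∫ φ dp` of a simple function `φ` against a finitely additive
measure `p` (junk value `0` if `φ` is not simple). -/
noncomputable def fInt (p : MSet S → ℝ) (φ : S → ℝ) : ℝ :=
  @dite _ (IsSimpleFn φ) (Classical.dec _)
    (fun h => ∑ y ∈ h.1.toFinset, y * p ⟨φ ⁻¹' {y}, h.2 y⟩) (fun _ => 0)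

/-- A functional `I : B₀(Σ) → ℝ` is monotonic. -/
def MonotonicFn (I : (S → ℝ) → ℝ) : Prop :=
  ∀ φ ψ, IsSimpleFn φ → IsSimpleFn ψ → (∀ s, φ s ≤ ψ s) → I φ ≤ I ψ

/-- A functional `I : B₀(Σ) → ℝ` is constant-linear: `I(aφ + b) = a I(φ) + b`
for `a ≥ 0`, `b ∈ ℝ`. -/
def ConstLinearFn (I : (S → ℝ) → ℝ) : Prop :=
  ∀ φ, IsSimpleFn φ → ∀ a : ℝ, 0 ≤ a → ∀ b : ℝ,
    I (fun s => a * φ s + b) = a * I φ + b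

end Fns

section Acts

variable {S : Type*} [MeasurableSpace S] {V : Type*} [AddCommGroup V] [Module ℝ V]

/-- `f : S → V` is a simple act with outcomes in `X`: it is `X`-valued,
takes finitely many values and is `Σ`-measurable. -/
def IsAct (X : Set V) (f : S → V) : Prop :=
  (∀ s, f s ∈ X) ∧ (Set.range f).Finite ∧ ∀ v : V, MeasurableSet (f ⁻¹' {v})

/-- Pointwise mixture `αf + (1-α)g` of two acts. -/
def mixAct (α : ℝ) (f g : S → V) : S → V := fun s => α • f s + (1 - α) • g s

/-- The constant act with outcome `x`. -/
def constAct (S : Type*) {V : Type*} (x : V) : S → V := fun _ => x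

/-- `u : V → ℝ` is affine on the convex set `X`. -/
def IsAffineOn (u : V → ℝ) (X : Set V) : Prop :=
  ∀ x ∈ X, ∀ y ∈ X, ∀ α : ℝ, 0 ≤ α → α ≤ 1 →
    u (α • x + (1 - α) • y) = α * u x + (1 - α) * u y

/-- `u` is non-constant on `X`. -/
def NonConstOn (u : V → ℝ) (X : Set V) : Prop := ∃ x ∈ X, ∃ y ∈ X, u x ≠ u y

/-- Expected utility `∫ u(f) dp` of the act `f` under the measure `p`. -/
noncomputable def EU (u : V → ℝ) (f : S → V) (p : MSet S → ℝ) : ℝ :=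
  fInt p (fun s => u (f s))

/-- Worst-case expected utility of `f` over the set of scenarios `C`. -/
noncomputable def minEU (u : V → ℝ) (C : Set (MSet S → ℝ)) (f : S → V) : ℝ :=
  sInf (EU u f '' C)

/-- Best-case expected utility of `f` over the set of scenarios `D`. -/
noncomputable def maxEU (u : V → ℝ) (D : Set (MSet S → ℝ)) (f : S → V) : ℝ :=
  sSup (EU u f '' D)

/-- `f` and `g` are incomparable (`f ⋈ g`). -/
def Incomp (R : (S → V) → (S → V) → Prop) (f g : S → V) : Prop := ¬ R f g ∧ ¬ R g f

end Acts

section Axioms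

variable {S : Type*} [MeasurableSpace S] {V : Type*} [AddCommGroup V] [Module ℝ V]
variable (X : Set V) (R : (S → V) → (S → V) → Prop)

/-- Axiom 1: `≻` is asymmetric and transitive on acts, and its restriction to
constant acts is non-trivial and negatively transitive. -/
def PrefAx1 : Prop :=
  (∀ f g, IsAct X f → IsAct X g → R f g → ¬ R g f) ∧
  (∀ f g h, IsAct X f → IsAct X g → IsAct X h → R f g → R g h → R f h) ∧
  (∃ x ∈ X, ∃ y ∈ X, R (constAct S x) (constAct S y)) ∧
  (∀ x ∈ X, ∀ y ∈ X, ∀ z ∈ X, ¬ R (constAct S x) (constAct S y) →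
    ¬ R (constAct S y) (constAct S z) → ¬ R (constAct S x) (constAct S z))

/-- Axiom 2 (continuity). -/
def PrefAx2 : Prop :=
  ∀ f g h, IsAct X f → IsAct X g → IsAct X h →
    IsOpen {α : Set.Icc (0 : ℝ) 1 | R (mixAct (α : ℝ) f g) h} ∧
    IsOpen {α : Set.Icc (0 : ℝ) 1 | R h (mixAct (α : ℝ) f g)}

/-- Axiom 3 (certainty independence). -/
def PrefAx3 : Prop :=
  ∀ f g, IsAct X f → IsAct X g → ∀ x ∈ X, ∀ α : ℝ, 0 < α → α < 1 →
    (R f g ↔ R (mixAct α f (constAct S x)) (mixAct α g (constAct S x)))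

/-- Axiom 4: for any outcome `x`, the upper and lower contour sets at the
constant act `x` are convex. -/
def PrefAx4 : Prop :=
  ∀ x ∈ X,
    (∀ f g, IsAct X f → IsAct X g → R f (constAct S x) → R g (constAct S x) →
      ∀ α : ℝ, 0 ≤ α → α ≤ 1 → R (mixAct α f g) (constAct S x)) ∧
    (∀ f g, IsAct X f → IsAct X g → R (constAct S x) f → R (constAct S x) g →
      ∀ α : ℝ, 0 ≤ α → α ≤ 1 → R (constAct S x) (mixAct α f g))

/-- Axiom 5 (monotonicity). -/
def PrefAx5 : Prop :=
  ∀ f g, IsAct X f → IsAct X g →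
    (∀ s : S, R (constAct S (f s)) (constAct S (g s))) → R f g

/-- Axiom 6: if every outcome incomparable to `f` is incomparable to `g`,
then `f` and `g` are incomparable. -/
def PrefAx6 : Prop :=
  ∀ f g, IsAct X f → IsAct X g →
    (∀ x ∈ X, Incomp R f (constAct S x) → Incomp R g (constAct S x)) → Incomp R f g

/-- Axiom 7: if `f ⋈ x`, `x ≻ g`, `g ⋈ y` and `f ≻ y`, then `f ≻ g`. -/
def PrefAx7 : Prop :=
  ∀ f g, IsAct X f → IsAct X g → ∀ x ∈ X, ∀ y ∈ X,
    Incomp R f (constAct S x) → R (constAct S x) g →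
    Incomp R g (constAct S y) → R f (constAct S y) → R f g

end Axioms

section Reps

variable {S : Type*} [MeasurableSpace S] {V : Type*} [AddCommGroup V] [Module ℝ V]

/-- `(u, C, D)` is a hope-and-prepare representation of `R`. -/
def IsHPRep (X : Set V) (R : (S → V) → (S → V) → Prop) (u : V → ℝ)
    (C D : Set (MSet S → ℝ)) : Prop :=
  IsAffineOn u X ∧ NonConstOn u X ∧
  C.Nonempty ∧ D.Nonempty ∧ C ⊆ ProbCharges S ∧ D ⊆ ProbCharges S ∧
  IsCompact C ∧ IsCompact D ∧ Convex ℝ C ∧ Convex ℝ D ∧ (C ∩ D).Nonempty ∧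
  ∀ f g, IsAct X f → IsAct X g →
    (R f g ↔ (minEU u C g < minEU u C f ∧ maxEU u D g < maxEU u D f))

/-- `(u, C)` is a Bewley representation of `R`. -/
def IsBewleyRep (X : Set V) (R : (S → V) → (S → V) → Prop) (u : V → ℝ)
    (C : Set (MSet S → ℝ)) : Prop :=
  IsAffineOn u X ∧ NonConstOn u X ∧
  C.Nonempty ∧ C ⊆ ProbCharges S ∧ IsCompact C ∧ Convex ℝ C ∧
  ∀ f g, IsAct X f → IsAct X g → (R f g ↔ ∀ p ∈ C, EU u g p < EU u f p)

/-- `(u, C, D)` is a twofold multi-prior representation of `R`. -/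
def IsTwofoldRep (X : Set V) (R : (S → V) → (S → V) → Prop) (u : V → ℝ)
    (C D : Set (MSet S → ℝ)) : Prop :=
  IsAffineOn u X ∧ NonConstOn u X ∧
  C.Nonempty ∧ D.Nonempty ∧ C ⊆ ProbCharges S ∧ D ⊆ ProbCharges S ∧
  IsCompact C ∧ IsCompact D ∧ Convex ℝ C ∧ Convex ℝ D ∧ (C ∩ D).Nonempty ∧
  ∀ f g, IsAct X f → IsAct X g → (R f g ↔ maxEU u D g < minEU u C f)

end Reps

/-!
Suppose `q ∈ C₀` lies outside the hull `K = co(⋃ Cᵢ)`, which is compact. A weak*-continuous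
functional separates `q` from `K`; it is a finite combination of evaluations `p ↦ p(A)`, i.e.
integration against a simple function, and after an increasing affine rescaling that simple
function is the utility profile `u ∘ f` of an act `f`. Then some constant act is strictly better
than `f` under every prior of every expert, but not under `q`, so the Pareto condition fails.

Conversely, expected utility is linear in the prior, so strict dominance under all priors of
`⋃ Cᵢ` persists on `K ⊇ C₀`. On `C₀` it yields the Bewley ranking directly, and the concordant
hope-and-prepare ranking because the min and max over the compact set `C₀` are attained.
-/

open MeasureTheory

section Convexity

variable {E : Type*} [AddCommGroup E] [Module ℝ E] [TopologicalSpace E]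
  [IsTopologicalAddGroup E] [ContinuousSMul ℝ E]

theorem IsCompact.convexJoin {s t : Set E} (hs : IsCompact s) (ht : IsCompact t) :
    IsCompact (_root_.convexJoin ℝ s t) := by
  have : _root_.convexJoin ℝ s t =
      (fun z : E × E × ℝ => (1 - z.2.2) • z.1 + z.2.2 • z.2.1) '' (s ×ˢ t ×ˢ Icc 0 1) := by
    ext x
    simp only [mem_convexJoin, segment_eq_image, mem_image, mem_prod, Prod.exists]
    aesop
  rw [this]
  exact (hs.prod (ht.prod isCompact_Icc)).image (by fun_prop)

theorem isCompact_convexHull_union {s t : Set E} (hs : IsCompact (convexHull ℝ s))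
    (ht : IsCompact (convexHull ℝ t)) : IsCompact (convexHull ℝ (s ∪ t)) := by
  rcases s.eq_empty_or_nonempty with rfl | hs₀
  · simpa using ht
  rcases t.eq_empty_or_nonempty with rfl | ht₀
  · simpa using hs
  rw [convexHull_union hs₀ ht₀]
  exact hs.convexJoin ht

theorem isCompact_convexHull_iUnion {ι : Type*} [Finite ι] {C : ι → Set E}
    (hC : ∀ i, IsCompact (convexHull ℝ (C i))) : IsCompact (convexHull ℝ (⋃ i, C i)) := by
  classical
  have := Fintype.ofFinite ι
  suffices ∀ s : Finset ι, IsCompact (convexHull ℝ (⋃ i ∈ s, C i)) by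
    simpa using this Finset.univ
  intro s
  induction s using Finset.induction_on with
  | empty => simp
  | insert i s _ ih =>
    rw [Finset.set_biUnion_insert]
    exact isCompact_convexHull_union (hC i) ih

end Convexity

theorem IsCompact.sInf_image_lt_sInf_image {α : Type*} [TopologicalSpace α] {K : Set α}
    (hK : IsCompact K) (hne : K.Nonempty) {F G : α → ℝ} (hF : ContinuousOn F K)
    (hG : ContinuousOn G K) (h : ∀ p ∈ K, G p < F p) : sInf (G '' K) < sInf (F '' K) := by
  obtain ⟨p, hp, hFp⟩ := hK.exists_sInf_image_eq hne hF
  calc sInf (G '' K) ≤ G p := csInf_le (hK.bddBelow_image hG) (mem_image_of_mem G hp)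
    _ < F p := h p hp
    _ = sInf (F '' K) := hFp.symm

theorem IsCompact.sSup_image_lt_sSup_image {α : Type*} [TopologicalSpace α] {K : Set α}
    (hK : IsCompact K) (hne : K.Nonempty) {F G : α → ℝ} (hF : ContinuousOn F K)
    (hG : ContinuousOn G K) (h : ∀ p ∈ K, G p < F p) : sSup (G '' K) < sSup (F '' K) := by
  obtain ⟨p, hp, hGp⟩ := hK.exists_sSup_image_eq hne hG
  calc sSup (G '' K) = G p := hGp
    _ < F p := h p hp
    _ ≤ sSup (F '' K) := le_csSup (hK.bddAbove_image hF) (mem_image_of_mem F hp)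

theorem ContinuousLinearMap.exists_finset_apply_eq_sum {ι : Type*} (L : (ι → ℝ) →L[ℝ] ℝ) :
    ∃ (I : Finset ι) (a : ι → ℝ), ∀ p, L p = ∑ j ∈ I, a j * p j := by
  have hL : (L : (ι → ℝ) →ₗ[ℝ] ℝ) ∈
      Submodule.span ℝ (range (LinearMap.proj (R := ℝ) (φ := fun _ : ι => ℝ))) :=
    (LinearMap.mem_span_iff_continuous _).2 L.continuous
  obtain ⟨c, hc⟩ := Finsupp.mem_span_range_iff_exists_finsupp.1 hL
  refine ⟨c.support, c, fun p => ?_⟩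
  simpa [Finsupp.sum] using (LinearMap.congr_fun hc p).symm

section Integration

variable {S : Type*} [MeasurableSpace S]

theorem isSimpleFn_coe (G : SimpleFunc S ℝ) : IsSimpleFn G :=
  ⟨G.finite_range, G.measurableSet_fiber⟩

noncomputable def IsSimpleFn.integralCLM {φ : S → ℝ} (hφ : IsSimpleFn φ) :
    (MSet S → ℝ) →L[ℝ] ℝ :=
  ∑ y ∈ hφ.1.toFinset, y • ContinuousLinearMap.proj ⟨φ ⁻¹' {y}, hφ.2 y⟩

theorem IsSimpleFn.integralCLM_apply {φ : S → ℝ} (hφ : IsSimpleFn φ) (p : MSet S → ℝ) :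
    hφ.integralCLM p = fInt p φ := by
  simp [IsSimpleFn.integralCLM, fInt, dif_pos hφ]

open Classical in
/-- A charge as an operator-valued set function, so that `fInt` becomes Mathlib's
`SimpleFunc.setToSimpleFunc` and inherits its linearity. Additivity with respect to the zero
measure, whose finiteness side conditions are vacuous, is plain finite additivity. -/
noncomputable def chargeCLM (p : MSet S → ℝ) (A : Set S) : ℝ →L[ℝ] ℝ :=
  (if h : MeasurableSet A then p ⟨A, h⟩ else 0) • ContinuousLinearMap.id ℝ ℝ

theorem fInt_coe_eq_setToSimpleFunc (p : MSet S → ℝ) (G : SimpleFunc S ℝ) :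
    fInt p G = G.setToSimpleFunc (chargeCLM p) := by
  rw [fInt, dif_pos (isSimpleFn_coe G), SimpleFunc.setToSimpleFunc]
  refine Finset.sum_congr rfl fun y _ => ?_
  simp [chargeCLM, G.measurableSet_fiber, mul_comm]

theorem finMeasAdditive_chargeCLM {p : MSet S → ℝ} (hp : p ∈ ProbCharges S) :
    FinMeasAdditive (0 : Measure S) (chargeCLM p) := by
  intro A B hA hB _ _ hAB
  ext
  simp [chargeCLM, hA, hB, hA.union hB, hp.2.2 ⟨A, hA⟩ ⟨B, hB⟩ hAB, add_smul]

section Charge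

variable {p : MSet S → ℝ} (hp : p ∈ ProbCharges S)
include hp

theorem fInt_add (G H : SimpleFunc S ℝ) : fInt p ⇑(G + H) = fInt p G + fInt p H := by
  simp only [fInt_coe_eq_setToSimpleFunc]
  exact SimpleFunc.setToSimpleFunc_add _ (finMeasAdditive_chargeCLM hp)
    integrable_zero_measure integrable_zero_measure

theorem fInt_const (c : ℝ) : fInt p (fun _ : S => c) = c := by
  change fInt p ⇑(SimpleFunc.const S c) = c
  rw [fInt_coe_eq_setToSimpleFunc, SimpleFunc.setToSimpleFunc_const _
    (finMeasAdditive_chargeCLM hp).map_empty_eq_zero]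
  simp [chargeCLM, hp.2.1]

theorem fInt_mul_add_const (G : SimpleFunc S ℝ) (a b : ℝ) :
    fInt p (fun s => a * G s + b) = a * fInt p G + b := by
  have h : (fun s => a * G s + b) = ⇑(a • G + SimpleFunc.const S b) := by
    ext s; simp
  rw [h, fInt_add hp, fInt_coe_eq_setToSimpleFunc p (a • G), fInt_coe_eq_setToSimpleFunc p G,
    SimpleFunc.setToSimpleFunc_smul_real _ (finMeasAdditive_chargeCLM hp) a integrable_zero_measure,
    SimpleFunc.coe_const]
  congr 1
  exact fInt_const hp b

theorem fInt_piecewise_const_zero (A : MSet S) (c : ℝ) :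
    fInt p ⇑(SimpleFunc.piecewise A.1 A.2 (SimpleFunc.const S c) (SimpleFunc.const S 0)) =
      c * p A := by
  rw [fInt_coe_eq_setToSimpleFunc, SimpleFunc.setToSimpleFunc_indicator _
    (finMeasAdditive_chargeCLM hp).map_empty_eq_zero]
  simp [chargeCLM, A.2, mul_comm]

end Charge

theorem exists_simpleFunc_fInt_eq_sum (I : Finset (MSet S)) (a : MSet S → ℝ) :
    ∃ G : SimpleFunc S ℝ, ∀ p ∈ ProbCharges S, fInt p G = ∑ j ∈ I, a j * p j := by
  classical
  induction I using Finset.induction_on with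
  | empty => exact ⟨0, fun p hp => (fInt_const hp 0).trans Finset.sum_empty.symm⟩
  | insert j I hj ih =>
    obtain ⟨G, hG⟩ := ih
    refine ⟨SimpleFunc.piecewise j.1 j.2 (SimpleFunc.const S (a j)) (SimpleFunc.const S 0) + G,
      fun p hp => ?_⟩
    rw [fInt_add hp, fInt_piecewise_const_zero hp, hG p hp, Finset.sum_insert hj]

theorem exists_simpleFunc_fInt_eq (L : (MSet S → ℝ) →L[ℝ] ℝ) :
    ∃ G : SimpleFunc S ℝ, ∀ p ∈ ProbCharges S, fInt p G = L p := by
  obtain ⟨I, a, hL⟩ := L.exists_finset_apply_eq_sum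
  obtain ⟨G, hG⟩ := exists_simpleFunc_fInt_eq_sum I a
  exact ⟨G, fun p hp => (hG p hp).trans (hL p).symm⟩

end Integration

theorem exists_pos_mul_add_mapsTo_Icc {m M a b : ℝ} (hmM : m ≤ M) (hab : a < b) :
    ∃ α > 0, ∃ β, MapsTo (fun t => α * t + β) (Icc m M) (Icc a b) := by
  have hα : 0 < (b - a) / (M - m + 1) := div_pos (by linarith) (by linarith)
  refine ⟨(b - a) / (M - m + 1), hα, a - (b - a) / (M - m + 1) * m, fun t ht => ⟨?_, ?_⟩⟩
  · nlinarith [ht.1]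
  · have : (b - a) / (M - m + 1) * (M - m) ≤ b - a := by
      rw [div_mul_eq_mul_div, div_le_iff₀ (by linarith)]
      nlinarith
    nlinarith [ht.2]

section Acts

variable {S : Type*} [MeasurableSpace S] {V : Type*} {X : Set V} {u : V → ℝ}

theorem isAct_simpleFunc {F : SimpleFunc S V} (h : ∀ s, F s ∈ X) : IsAct X F :=
  ⟨h, F.finite_range, F.measurableSet_fiber⟩

theorem isAct_constAct {z : V} (hz : z ∈ X) : IsAct X (constAct S z) :=
  isAct_simpleFunc (F := SimpleFunc.const S z) fun _ => hz

theorem EU_constAct {p : MSet S → ℝ} (hp : p ∈ ProbCharges S) (z : V) :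
    EU u (constAct S z) p = u z :=
  fInt_const hp (u z)

theorem IsAct.isSimpleFn_comp {f : S → V} (hf : IsAct X f) (u : V → ℝ) :
    IsSimpleFn (fun s => u (f s)) :=
  isSimpleFn_coe ((SimpleFunc.mk f hf.2.2 hf.2.1).map u)

theorem IsAct.EU_eq_integralCLM {f : S → V} (hf : IsAct X f) :
    EU u f = ⇑(hf.isSimpleFn_comp u).integralCLM :=
  funext fun p => ((hf.isSimpleFn_comp u).integralCLM_apply p).symm

theorem IsAct.continuous_EU {f : S → V} (hf : IsAct X f) : Continuous (EU u f) := by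
  rw [hf.EU_eq_integralCLM]
  exact ContinuousLinearMap.continuous _

theorem convex_setOf_EU_lt {f g : S → V} (hf : IsAct X f) (hg : IsAct X g) :
    Convex ℝ {p | EU u g p < EU u f p} := by
  have hset : {p | EU u g p < EU u f p} =
      {p | 0 < ((hf.isSimpleFn_comp u).integralCLM - (hg.isSimpleFn_comp u).integralCLM) p} := by
    simp [hf.EU_eq_integralCLM, hg.EU_eq_integralCLM]
  rw [hset]
  exact convex_halfSpace_gt
    ((hf.isSimpleFn_comp u).integralCLM - (hg.isSimpleFn_comp u).integralCLM).isLinear 0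

theorem EU_lt_of_mem_convexHull {f g : S → V} (hf : IsAct X f) (hg : IsAct X g)
    {U : Set (MSet S → ℝ)} (h : ∀ p ∈ U, EU u g p < EU u f p) :
    ∀ p ∈ convexHull ℝ U, EU u g p < EU u f p :=
  fun _ hp => convexHull_min h (convex_setOf_EU_lt hf hg) hp

theorem NonConstOn.exists_lt (h : NonConstOn u X) : ∃ x ∈ X, ∃ y ∈ X, u x < u y := by
  obtain ⟨x, hx, y, hy, hxy⟩ := h
  rcases hxy.lt_or_gt with hlt | hlt
  exacts [⟨x, hx, y, hy, hlt⟩, ⟨y, hy, x, hx, hlt⟩]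

variable [AddCommGroup V] [Module ℝ V]

theorem IsAffineOn.exists_eq_of_mem_Icc (hX : Convex ℝ X) (hu : IsAffineOn u X) {x y : V}
    (hx : x ∈ X) (hy : y ∈ X) {r : ℝ} (hr : r ∈ Icc (u x) (u y)) : ∃ v ∈ X, u v = r := by
  rcases hr.1.eq_or_lt with hxr | hxr
  · exact ⟨x, hx, hxr⟩
  obtain ⟨θ, hθ⟩ : ∃ θ, θ = (r - u x) / (u y - u x) := ⟨_, rfl⟩
  have hxy : 0 < u y - u x := by linarith [hr.2]
  have hθ0 : 0 ≤ θ := hθ ▸ div_nonneg (by linarith) hxy.le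
  have hθ1 : θ ≤ 1 := hθ ▸ (div_le_one hxy).2 (by linarith [hr.2])
  refine ⟨θ • y + (1 - θ) • x, hX hy hx hθ0 (by linarith) (by ring), ?_⟩
  rw [hu y hy x hx θ hθ0 hθ1, hθ]
  field_simp
  ring

theorem exists_act_EU_eq_mul_add (hX : Convex ℝ X) (hu : IsAffineOn u X) (hnc : NonConstOn u X)
    (G : SimpleFunc S ℝ) (t : ℝ) :
    ∃ f, IsAct X f ∧ ∃ z ∈ X, ∃ α > 0, ∃ β,
      (∀ p ∈ ProbCharges S, EU u f p = α * fInt p G + β) ∧ u z = α * t + β := by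
  classical
  obtain ⟨x, hx, y, hy, hxy⟩ := hnc.exists_lt
  obtain ⟨m, hm⟩ := (insert t G.range).bddBelow
  obtain ⟨M, hM⟩ := (insert t G.range).bddAbove
  have hbounds : ∀ r ∈ insert t G.range, r ∈ Icc m M := fun r hr => ⟨hm hr, hM hr⟩
  have ht := hbounds t (Finset.mem_insert_self t _)
  have hG : ∀ s, G s ∈ Icc m M := fun s =>
    hbounds _ (Finset.mem_insert_of_mem (G.mem_range_self s))
  obtain ⟨α, hα, β, hαβ⟩ := exists_pos_mul_add_mapsTo_Icc (ht.1.trans ht.2) hxy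
  have hlevel : ∀ r ∈ Icc m M, ∃ v ∈ X, u v = α * r + β := fun r hr =>
    hu.exists_eq_of_mem_Icc hX hx hy (hαβ hr)
  choose! g hgX hgu using hlevel
  refine ⟨G.map g, isAct_simpleFunc fun s => hgX _ (hG s), g t, hgX t ht, α, hα, β,
    fun p hp => ?_, hgu t ht⟩
  have : (fun s => u (G.map g s)) = fun s => α * G s + β := funext fun s => hgu _ (hG s)
  rw [EU, this, fInt_mul_add_const hp]

end Acts

section Representations

variable {S : Type*} [MeasurableSpace S] {V : Type*} [AddCommGroup V] [Module ℝ V]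
  {X : Set V} {R : (S → V) → (S → V) → Prop} {u : V → ℝ} {f g : S → V}

namespace IsBewleyRep

variable {C : Set (MSet S → ℝ)} (h : IsBewleyRep X R u C)
include h

theorem subset_probCharges : C ⊆ ProbCharges S := h.2.2.2.1

theorem isCompact_convexHull : IsCompact (convexHull ℝ C) := by
  rw [h.2.2.2.2.2.1.convexHull_eq]
  exact h.2.2.2.2.1

theorem rel_iff (hf : IsAct X f) (hg : IsAct X g) :
    R f g ↔ ∀ p ∈ C, EU u g p < EU u f p :=
  h.2.2.2.2.2.2 f g hf hg

theorem EU_lt_of_rel_constAct {z : V} (hf : IsAct X f) (hz : z ∈ X) (hR : R (constAct S z) f) :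
    ∀ q ∈ C, EU u f q < u z := fun q hq => by
  simpa only [EU_constAct (h.subset_probCharges hq)] using
    (h.rel_iff (isAct_constAct hz) hf).1 hR q hq

end IsBewleyRep

namespace IsHPRep

variable {C D : Set (MSet S → ℝ)} (h : IsHPRep X R u C D)
include h

theorem rel_of_forall_EU_lt (hf : IsAct X f) (hg : IsAct X g)
    (hC : ∀ p ∈ C, EU u g p < EU u f p) (hD : ∀ p ∈ D, EU u g p < EU u f p) : R f g := by
  obtain ⟨-, -, hC₀, hD₀, -, -, hCc, hDc, -, -, -, hR⟩ := h
  exact (hR f g hf hg).2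
    ⟨hCc.sInf_image_lt_sInf_image hC₀ hf.continuous_EU.continuousOn
      hg.continuous_EU.continuousOn hC,
     hDc.sSup_image_lt_sSup_image hD₀ hf.continuous_EU.continuousOn
      hg.continuous_EU.continuousOn hD⟩

theorem EU_lt_of_rel_constAct {z : V} (hf : IsAct X f) (hz : z ∈ X) (hR : R (constAct S z) f) :
    ∀ q ∈ D, EU u f q < u z := by
  obtain ⟨-, -, -, hD₀, -, hDp, -, hDc, -, -, -, hrep⟩ := h
  have hmax : maxEU u D f < maxEU u D (constAct S z) :=
    ((hrep _ _ (isAct_constAct hz) hf).1 hR).2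
  have hconst : maxEU u D (constAct S z) = u z := by
    rw [maxEU, (hD₀.image (EU u (constAct S z))).subset_singleton_iff.1
      (image_subset_iff.2 fun p hp => EU_constAct (hDp hp) z), csSup_singleton]
  intro q hq
  calc EU u f q ≤ maxEU u D f :=
        le_csSup (hDc.bddAbove_image hf.continuous_EU.continuousOn) (mem_image_of_mem _ hq)
    _ < maxEU u D (constAct S z) := hmax
    _ = u z := hconst

end IsHPRep

end Representations

section Separation

variable {S : Type*} [MeasurableSpace S] {V : Type*} [AddCommGroup V] [Module ℝ V]

theorem subset_convexHull_of_forall_EU_lt {X : Set V} (hX : Convex ℝ X) {u : V → ℝ}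
    (hu : IsAffineOn u X) (hnc : NonConstOn u X) {U C : Set (MSet S → ℝ)}
    (hU : U ⊆ ProbCharges S) (hC : C ⊆ ProbCharges S) (hUc : IsClosed (convexHull ℝ U))
    (h : ∀ f z, IsAct X f → z ∈ X → (∀ p ∈ U, EU u f p < u z) → ∀ q ∈ C, EU u f q < u z) :
    C ⊆ convexHull ℝ U := by
  intro q hq
  by_contra hqU
  obtain ⟨L, t, hLU, htq⟩ := geometric_hahn_banach_closed_point (convex_convexHull ℝ U) hUc hqU
  obtain ⟨G, hG⟩ := exists_simpleFunc_fInt_eq L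
  obtain ⟨f, hf, z, hz, α, hα, β, hEU, huz⟩ := exists_act_EU_eq_mul_add hX hu hnc G t
  have hfU : ∀ p ∈ U, EU u f p < u z := fun p hp => by
    rw [hEU p (hU hp), hG p (hU hp), huz]
    gcongr
    exact hLU p (subset_convexHull ℝ U hp)
  have hfq := h f z hf hz hfU q hq
  rw [hEU q (hC hq), hG q (hC hq), huz] at hfq
  linarith [mul_lt_mul_of_pos_left htq hα]

end Separation

section Statement

variable {S : Type*} [MeasurableSpace S] [Nonempty S]
variable {V : Type*} [AddCommGroup V] [Module ℝ V]

theorem statement8_general (X : Set V) (hX : Convex ℝ X) {n : ℕ}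
    (Rexp : Fin n → (S → V) → (S → V) → Prop) (R0 : (S → V) → (S → V) → Prop)
    (u : V → ℝ) (Ci : Fin n → Set (MSet S → ℝ)) (C0 : Set (MSet S → ℝ))
    (hexp : ∀ i, IsBewleyRep X (Rexp i) u (Ci i))
    (hdm : IsHPRep X R0 u C0 C0 ∨ IsBewleyRep X R0 u C0) :
    (∀ f g, IsAct X f → IsAct X g → (∀ i, Rexp i f g) → R0 f g) ↔
      C0 ⊆ convexHull ℝ (⋃ i, Ci i) := by
  obtain ⟨hu, hnc, hC0⟩ : IsAffineOn u X ∧ NonConstOn u X ∧ C0 ⊆ ProbCharges S := by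
    rcases hdm with ⟨hu, hnc, -, -, hC0, -⟩ | ⟨hu, hnc, -, hC0, -⟩ <;> exact ⟨hu, hnc, hC0⟩
  have hCi : (⋃ i, Ci i) ⊆ ProbCharges S := iUnion_subset fun i => (hexp i).subset_probCharges
  have hunanimous : ∀ f g, IsAct X f → IsAct X g →
      ((∀ i, Rexp i f g) ↔ ∀ p ∈ ⋃ i, Ci i, EU u g p < EU u f p) := fun f g hf hg => by
    simp only [mem_iUnion, forall_exists_index, (hexp _).rel_iff hf hg]
    exact forall_comm
  constructor
  · intro hpareto
    refine subset_convexHull_of_forall_EU_lt hX hu hnc hCi hC0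
      (isCompact_convexHull_iUnion fun i => (hexp i).isCompact_convexHull).isClosed
      fun f z hf hz hfz => ?_
    have hR0 : R0 (constAct S z) f := hpareto _ _ (isAct_constAct hz) hf <|
      (hunanimous _ _ (isAct_constAct hz) hf).2 fun p hp => by
        rw [EU_constAct (hCi hp)]
        exact hfz p hp
    rcases hdm with h | h
    exacts [h.EU_lt_of_rel_constAct hf hz hR0, h.EU_lt_of_rel_constAct hf hz hR0]
  · intro hsub f g hf hg hexperts
    have hdom : ∀ p ∈ C0, EU u g p < EU u f p := fun p hp =>
      EU_lt_of_mem_convexHull hf hg ((hunanimous f g hf hg).1 hexperts) p (hsub hp)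
    rcases hdm with h | h
    exacts [h.rel_of_forall_EU_lt hf hg hdom hdom, (h.rel_iff hf hg).2 hdom]

/-- Proposition 3(i): with experts `i ∈ {1,…,n}` holding
Bewley preferences `(u, Cᵢ)` and a DM holding either a concordant
hope-and-prepare preference `(u, C₀, C₀)` or a Bewley preference `(u, C₀)`,
the Pareto condition holds iff `C₀ ⊆ co(⋃ᵢ Cᵢ)`. -/
theorem statement8 (X : Set V) (hX : Convex ℝ X) (hX2 : ∃ x ∈ X, ∃ y ∈ X, x ≠ y)
    {n : ℕ} (hn : 0 < n)
    (Rexp : Fin n → (S → V) → (S → V) → Prop) (R0 : (S → V) → (S → V) → Prop)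
    (u : V → ℝ) (Ci : Fin n → Set (MSet S → ℝ)) (C0 : Set (MSet S → ℝ))
    (hexp : ∀ i, IsBewleyRep X (Rexp i) u (Ci i))
    (hdm : IsHPRep X R0 u C0 C0 ∨ IsBewleyRep X R0 u C0) :
    (∀ f g, IsAct X f → IsAct X g → (∀ i, Rexp i f g) → R0 f g) ↔
      C0 ⊆ convexHull ℝ (⋃ i, Ci i) :=
  statement8_general X hX Rexp R0 u Ci C0 hexp hdm

end Statement
end

section
/- Suppose the binary relation ≻ on F satisfies Axioms 1–7. Then for all f ∈ F and x, y ∈ X: if f ≻ x and x ≿ y (i.e. not y ≻ x), then f ≻ y. -/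
/-!
Framework: Anscombe–Aumann acts, finitely additive probability measures,
simple acts, hope-and-prepare preferences (Bastianello–Hill style setup).
-/

open Set

section Statement

variable {S : Type*} [MeasurableSpace S] [Nonempty S]
variable {V : Type*} [AddCommGroup V] [Module ℝ V]

lemma isAct_constAct_s12 {S : Type*} [MeasurableSpace S] {V : Type*} [AddCommGroup V]
    [Module ℝ V] {X : Set V} {x : V} (hx : x ∈ X) : IsAct X (constAct S x) := by
  refine ⟨fun _ => hx, (Set.finite_singleton x).subset ?_, ?_⟩
  · rintro v ⟨s, rfl⟩; rfl
  · intro v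
    by_cases h : x = v
    · convert MeasurableSet.univ
      ext s; simp [constAct, h]
    · convert MeasurableSet.empty
      ext s; simp [constAct, h]

/-- Lemma 3: under Axioms 1–7, if `f ≻ x` and `x ≿ y`
(i.e. not `y ≻ x`), then `f ≻ y`. -/
theorem statement12 (X : Set V) (hX : Convex ℝ X) (hX2 : ∃ x ∈ X, ∃ y ∈ X, x ≠ y)
    (R : (S → V) → (S → V) → Prop)
    (hax : PrefAx1 X R ∧ PrefAx2 X R ∧ PrefAx3 X R ∧ PrefAx4 X R ∧ PrefAx5 X R ∧
      PrefAx6 X R ∧ PrefAx7 X R)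
    (f : S → V) (hf : IsAct X f) (x y : V) (hx : x ∈ X) (hy : y ∈ X)
    (h1 : R f (constAct S x)) (h2 : ¬ R (constAct S y) (constAct S x)) :
    R f (constAct S y) := by
  obtain ⟨⟨asym, tr, _, negtrans⟩, _, _, _, _, ax6, ax7⟩ := hax
  have hax_x : IsAct X (constAct S x) := isAct_constAct_s12 hx
  have hax_y : IsAct X (constAct S y) := isAct_constAct_s12 hy
  -- not y ≻ f, else y ≻ x by transitivity
  have hyf : ¬ R (constAct S y) f := fun h => h2 (tr _ _ _ hax_y hf hax_x h h1)
  by_cases hxy : R (constAct S x) (constAct S y)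
  · exact tr _ _ _ hf hax_x hax_y h1 hxy
  -- now x ⋈ y; suppose for contradiction ¬ (f ≻ y)
  by_contra hfy'
  have hinc : Incomp R f (constAct S y) := ⟨hfy', hyf⟩
  -- Axiom 6 contrapositive on (f, const x): some z with f ⋈ z, x comparable to z
  have h6 : ¬ Incomp R f (constAct S x) := fun h => h.1 h1
  have hzex : ∃ z ∈ X, Incomp R f (constAct S z) ∧
      ¬ Incomp R (constAct S x) (constAct S z) := by
    by_contra hcon
    push_neg at hcon
    exact h6 (ax6 f (constAct S x) hf hax_x hcon)
  obtain ⟨z, hzX, hfz, hxz⟩ := hzex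
  have hax_z : IsAct X (constAct S z) := isAct_constAct_s12 hzX
  by_cases hzx : R (constAct S z) (constAct S x)
  · -- case z ≻ x : then z ≻ y, and Axiom 7 gives f ≻ y, contradiction
    have hzy : R (constAct S z) (constAct S y) := by
      by_contra hzy
      exact negtrans z hzX y hy x hx hzy h2 hzx
    exact hfy' (ax7 f (constAct S y) hf hax_y z hzX x hx hfz hzy ⟨h2, hxy⟩ h1)
  · -- case x ≻ z
    have hxz' : R (constAct S x) (constAct S z) := by
      by_contra hxz''
      exact hxz ⟨hxz'', hzx⟩
    -- then y ≻ z
    have hyz : R (constAct S y) (constAct S z) := by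
      by_contra hyz
      exact negtrans x hx y hy z hzX hxy hyz hxz'
    -- Axiom 6 contrapositive on (const z, const x): some u with z ⋈ u, x comparable to u
    have h6' : ¬ Incomp R (constAct S z) (constAct S x) := fun h => h.2 hxz'
    have huex : ∃ u ∈ X, Incomp R (constAct S z) (constAct S u) ∧
        ¬ Incomp R (constAct S x) (constAct S u) := by
      by_contra hcon
      push_neg at hcon
      exact h6' (ax6 (constAct S z) (constAct S x) hax_z hax_x hcon)
    obtain ⟨u, huX, hzu, hxu⟩ := huex
    have hax_u : IsAct X (constAct S u) := isAct_constAct_s12 huX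
    by_cases hux : R (constAct S u) (constAct S x)
    · -- u ≻ x ≻ z contradicts z ⋈ u
      exact hzu.2 (tr _ _ _ hax_u hax_x hax_z hux hxz')
    · have hxu' : R (constAct S x) (constAct S u) := by
        by_contra hxu''
        exact hxu ⟨hxu'', hux⟩
      have hfu : R f (constAct S u) := tr _ _ _ hf hax_x hax_u h1 hxu'
      -- Axiom 7: f ⋈ y, y ≻ z, z ⋈ u, f ≻ u  ⇒  f ≻ z, contradicting f ⋈ z
      exact hfz.1 (ax7 f (constAct S z) hf hax_z y hy u huX hinc hyz hzu hfu)

end Statement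
end

section
/- Suppose the binary relation ≻ on F satisfies Axioms 1, 2, 3 and 5. Then for all f, g ∈ F with f(s) ≿ g(s) for all s ∈ S (where x ≿ y means not y ≻ x), and for all x ∈ X: if x ⋈ f then not (g ≻ x); and if x ⋈ g then not (x ≻ f). -/
/-!
Framework: Anscombe–Aumann acts, finitely additive probability measures,
simple acts, hope-and-prepare preferences (Bastianello–Hill style setup).
-/

open Set

section AuxHP

variable {S : Type*} [MeasurableSpace S]
variable {V : Type*} [AddCommGroup V] [Module ℝ V]
variable {X : Set V} {R : (S → V) → (S → V) → Prop}

lemma hp_constAct_isAct {x : V} (hx : x ∈ X) : IsAct X (constAct S x) := by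
  refine ⟨fun _ => hx, (Set.finite_singleton x).subset ?_, fun v => ?_⟩
  · rintro _ ⟨s, rfl⟩; exact rfl
  · by_cases h : x = v
    · have : (constAct S x) ⁻¹' {v} = Set.univ := by ext s; simp [constAct, h]
      rw [this]; exact MeasurableSet.univ
    · have : (constAct S x) ⁻¹' {v} = ∅ := by ext s; simp [constAct, h]
      rw [this]; exact MeasurableSet.empty

lemma hp_isAct_mix (hX : Convex ℝ X) {f : S → V} (hf : IsAct X f) {c : V} (hc : c ∈ X)
    {α : ℝ} (h0 : 0 ≤ α) (h1 : α ≤ 1) : IsAct X (mixAct α f (constAct S c)) := by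
  refine ⟨fun s => hX (hf.1 s) hc h0 (by linarith) (by ring), ?_, ?_⟩
  · have hsub : Set.range (mixAct α f (constAct S c)) ⊆
        (fun v => α • v + (1-α) • c) '' Set.range f := by
      rintro _ ⟨s, rfl⟩; exact ⟨f s, ⟨s, rfl⟩, rfl⟩
    exact (hf.2.1.image _).subset hsub
  · intro v
    rcases eq_or_ne α 0 with rfl | hα
    · have he : mixAct (0:ℝ) f (constAct S c) = constAct S c := by
        funext s; show (0:ℝ) • f s + (1-0:ℝ) • c = c; module
      rw [he]
      exact (hp_constAct_isAct hc).2.2 v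
    · have he : mixAct α f (constAct S c) ⁻¹' {v} = f ⁻¹' {α⁻¹ • (v - (1-α) • c)} := by
        ext s
        simp only [mixAct, constAct, Set.mem_preimage, Set.mem_singleton_iff]
        constructor
        · intro h; rw [← h, add_sub_cancel_right, inv_smul_smul₀ hα]
        · intro h; rw [h, smul_inv_smul₀ hα, sub_add_cancel]
      rw [he]; exact hf.2.2 _

/-- Negative transitivity on constants. -/
lemma hp_nt (ax1 : PrefAx1 X R) {a b c : V} (ha : a ∈ X) (hb : b ∈ X) (hc : c ∈ X)
    (h1 : ¬ R (constAct S a) (constAct S b)) (h2 : ¬ R (constAct S b) (constAct S c)) :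
    ¬ R (constAct S a) (constAct S c) := ax1.2.2.2 a ha b hb c hc h1 h2

lemma hp_irrefl (ax1 : PrefAx1 X R) {a : V} (ha : a ∈ X) :
    ¬ R (constAct S a) (constAct S a) := fun h =>
  ax1.1 _ _ (hp_constAct_isAct ha) (hp_constAct_isAct ha) h h

/-- `a ≿ b ≻ c → a ≻ c` on constants. -/
lemma hp_compA (ax1 : PrefAx1 X R) {a b c : V} (ha : a ∈ X) (hb : b ∈ X) (hc : c ∈ X)
    (h1 : ¬ R (constAct S b) (constAct S a)) (h2 : R (constAct S b) (constAct S c)) :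
    R (constAct S a) (constAct S c) := by
  by_contra hac
  exact hp_nt ax1 hb ha hc h1 hac h2

/-- `a ≻ b ≿ c → a ≻ c` on constants. -/
lemma hp_compB (ax1 : PrefAx1 X R) {a b c : V} (ha : a ∈ X) (hb : b ∈ X) (hc : c ∈ X)
    (h1 : R (constAct S a) (constAct S b)) (h2 : ¬ R (constAct S c) (constAct S b)) :
    R (constAct S a) (constAct S c) := by
  by_contra hac
  exact hp_nt ax1 ha hc hb hac h2 h1

/-- Axiom 3 on constants. -/
lemma hp_A3c (ax3 : PrefAx3 X R) {p q c : V} (hp : p ∈ X) (hq : q ∈ X) (hc : c ∈ X)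
    {α : ℝ} (h0 : 0 < α) (h1 : α < 1) :
    R (constAct S p) (constAct S q) ↔
      R (constAct S (α • p + (1-α) • c)) (constAct S (α • q + (1-α) • c)) :=
  ax3 (constAct S p) (constAct S q) (hp_constAct_isAct hp) (hp_constAct_isAct hq) c hc α h0 h1

/-- Mixture monotonicity: `p₁ ≿ p₂`, `q₁ ≻ q₂` gives a strict preference between the
mixtures with the same weight. -/
lemma hp_mixMono (hX : Convex ℝ X) (ax1 : PrefAx1 X R) (ax3 : PrefAx3 X R)
    {p₁ p₂ q₁ q₂ : V} (hp₁ : p₁ ∈ X) (hp₂ : p₂ ∈ X) (hq₁ : q₁ ∈ X) (hq₂ : q₂ ∈ X)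
    {α : ℝ} (h0 : 0 < α) (h1 : α < 1)
    (hp : ¬ R (constAct S p₂) (constAct S p₁)) (hq : R (constAct S q₁) (constAct S q₂)) :
    R (constAct S (α • p₁ + (1-α) • q₁)) (constAct S (α • p₂ + (1-α) • q₂)) := by
  have hm1 : α • p₁ + (1-α) • q₁ ∈ X := hX hp₁ hq₁ h0.le (by linarith) (by ring)
  have hm2 : α • p₂ + (1-α) • q₁ ∈ X := hX hp₂ hq₁ h0.le (by linarith) (by ring)
  have hm3 : α • p₂ + (1-α) • q₂ ∈ X := hX hp₂ hq₂ h0.le (by linarith) (by ring)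
  have step1 : ¬ R (constAct S (α • p₂ + (1-α) • q₁)) (constAct S (α • p₁ + (1-α) • q₁)) :=
    fun h => hp ((hp_A3c ax3 hp₂ hp₁ hq₁ h0 h1).mpr h)
  have step2 : R (constAct S (α • p₂ + (1-α) • q₁)) (constAct S (α • p₂ + (1-α) • q₂)) := by
    have h2 := (hp_A3c ax3 hq₁ hq₂ hp₂ (by linarith : (0:ℝ) < 1 - α) (by linarith)).mp hq
    have e1 : (1-α) • q₁ + (1-(1-α)) • p₂ = α • p₂ + (1-α) • q₁ := by module
    have e2 : (1-α) • q₂ + (1-(1-α)) • p₂ = α • p₂ + (1-α) • q₂ := by module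
    rwa [e1, e2] at h2
  exact hp_compA ax1 hm1 hm2 hm3 step1 step2

/-- Mixture monotonicity: `p₁ ≻ p₂`, `q₁ ≿ q₂`. -/
lemma hp_mixMono' (hX : Convex ℝ X) (ax1 : PrefAx1 X R) (ax3 : PrefAx3 X R)
    {p₁ p₂ q₁ q₂ : V} (hp₁ : p₁ ∈ X) (hp₂ : p₂ ∈ X) (hq₁ : q₁ ∈ X) (hq₂ : q₂ ∈ X)
    {α : ℝ} (h0 : 0 < α) (h1 : α < 1)
    (hp : R (constAct S p₁) (constAct S p₂)) (hq : ¬ R (constAct S q₂) (constAct S q₁)) :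
    R (constAct S (α • p₁ + (1-α) • q₁)) (constAct S (α • p₂ + (1-α) • q₂)) := by
  have hm1 : α • p₁ + (1-α) • q₁ ∈ X := hX hp₁ hq₁ h0.le (by linarith) (by ring)
  have hm2 : α • p₂ + (1-α) • q₁ ∈ X := hX hp₂ hq₁ h0.le (by linarith) (by ring)
  have hm3 : α • p₂ + (1-α) • q₂ ∈ X := hX hp₂ hq₂ h0.le (by linarith) (by ring)
  have step1 : R (constAct S (α • p₁ + (1-α) • q₁)) (constAct S (α • p₂ + (1-α) • q₁)) :=
    (hp_A3c ax3 hp₁ hp₂ hq₁ h0 h1).mp hp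
  have step2 : ¬ R (constAct S (α • p₂ + (1-α) • q₂)) (constAct S (α • p₂ + (1-α) • q₁)) := by
    intro h2
    have e1 : (1-α) • q₂ + (1-(1-α)) • p₂ = α • p₂ + (1-α) • q₂ := by module
    have e2 : (1-α) • q₁ + (1-(1-α)) • p₂ = α • p₂ + (1-α) • q₁ := by module
    exact hq ((hp_A3c ax3 hq₂ hq₁ hp₂ (by linarith : (0:ℝ) < 1 - α) (by linarith)).mpr
      (by rwa [e1, e2]))
  exact hp_compB ax1 hm1 hm2 hm3 step1 step2

/-- If `p ≻ q` then the `2/3`-`1/3` mixture beats the `1/3`-`2/3` mixture. -/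
lemma hp_twoWeight (hX : Convex ℝ X) (ax1 : PrefAx1 X R) (ax3 : PrefAx3 X R)
    {p q : V} (hp : p ∈ X) (hq : q ∈ X) (hpq : R (constAct S p) (constAct S q)) :
    R (constAct S ((2/3 : ℝ) • p + (1-(2/3 : ℝ)) • q))
      (constAct S ((2/3 : ℝ) • q + (1-(2/3 : ℝ)) • p)) := by
  have hmid : (1/2 : ℝ) • q + (1-(1/2 : ℝ)) • p ∈ X :=
    hX hq hp (by norm_num) (by norm_num) (by norm_num)
  have hpmid : R (constAct S p) (constAct S ((1/2 : ℝ) • q + (1-(1/2 : ℝ)) • p)) := by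
    have h := hp_mixMono' hX ax1 ax3 hp hq hp hp (by norm_num : (0:ℝ) < 1/2)
      (by norm_num) hpq (hp_irrefl ax1 hp)
    have e : (1/2 : ℝ) • p + (1-(1/2 : ℝ)) • p = p := by module
    rwa [e] at h
  have h := hp_mixMono' hX ax1 ax3 hp hmid hq hq (by norm_num : (0:ℝ) < 2/3)
    (by norm_num) hpmid (hp_irrefl ax1 hq)
  have e : (2/3 : ℝ) • ((1/2 : ℝ) • q + (1-(1/2 : ℝ)) • p) + (1-(2/3 : ℝ)) • q
      = (2/3 : ℝ) • q + (1-(2/3 : ℝ)) • p := by module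
  rwa [e] at h

lemma hp_icc_zero {P : Set (Set.Icc (0:ℝ) 1)} (hP : IsOpen P)
    (h0 : (⟨0, by norm_num⟩ : Set.Icc (0:ℝ) 1) ∈ P) :
    ∃ t : Set.Icc (0:ℝ) 1, 0 < (t:ℝ) ∧ (t:ℝ) < 1 ∧ t ∈ P := by
  have hc : Continuous (Set.projIcc (0:ℝ) 1 zero_le_one) := continuous_projIcc
  have hU : IsOpen (Set.projIcc (0:ℝ) 1 zero_le_one ⁻¹' P) := hP.preimage hc
  have h0U : (0:ℝ) ∈ Set.projIcc (0:ℝ) 1 zero_le_one ⁻¹' P := by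
    have : Set.projIcc (0:ℝ) 1 zero_le_one 0 = ⟨0, by norm_num⟩ :=
      Set.projIcc_of_mem _ (by norm_num)
    simpa [Set.mem_preimage, this] using h0
  rw [Metric.isOpen_iff] at hU
  obtain ⟨ε, hε, hb⟩ := hU 0 h0U
  set t : ℝ := min (ε/2) 2⁻¹ with htd
  have ht0 : 0 < t := lt_min (by linarith) (by norm_num)
  have ht1 : t < 1 := lt_of_le_of_lt (min_le_right _ _) (by norm_num)
  have htI : t ∈ Set.Icc (0:ℝ) 1 := ⟨ht0.le, ht1.le⟩
  have htb : t ∈ Metric.ball (0:ℝ) ε := by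
    have : dist t 0 < ε := by
      rw [Real.dist_eq, sub_zero, abs_of_nonneg ht0.le]
      exact lt_of_le_of_lt (min_le_left _ _) (by linarith)
    exact this
  have hmem := hb htb
  refine ⟨⟨t, htI⟩, ht0, ht1, ?_⟩
  rwa [Set.mem_preimage, Set.projIcc_of_mem _ htI] at hmem

lemma hp_icc_one {P : Set (Set.Icc (0:ℝ) 1)} (hP : IsOpen P)
    (h1 : (⟨1, by norm_num⟩ : Set.Icc (0:ℝ) 1) ∈ P) :
    ∃ t : Set.Icc (0:ℝ) 1, 0 < (t:ℝ) ∧ (t:ℝ) < 1 ∧ t ∈ P := by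
  have hc : Continuous (Set.projIcc (0:ℝ) 1 zero_le_one) := continuous_projIcc
  have hU : IsOpen (Set.projIcc (0:ℝ) 1 zero_le_one ⁻¹' P) := hP.preimage hc
  have h1U : (1:ℝ) ∈ Set.projIcc (0:ℝ) 1 zero_le_one ⁻¹' P := by
    have : Set.projIcc (0:ℝ) 1 zero_le_one 1 = ⟨1, by norm_num⟩ :=
      Set.projIcc_of_mem _ (by norm_num)
    simpa [Set.mem_preimage, this] using h1
  rw [Metric.isOpen_iff] at hU
  obtain ⟨ε, hε, hb⟩ := hU 1 h1U
  set u : ℝ := min (ε/2) 2⁻¹ with hud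
  have hu0 : 0 < u := lt_min (by linarith) (by norm_num)
  have hu1 : u ≤ 2⁻¹ := min_le_right _ _
  set t : ℝ := 1 - u with htd
  have ht0 : 0 < t := by rw [htd]; nlinarith [hu1]
  have ht1 : t < 1 := by rw [htd]; linarith
  have htI : t ∈ Set.Icc (0:ℝ) 1 := ⟨ht0.le, ht1.le⟩
  have htb : t ∈ Metric.ball (1:ℝ) ε := by
    have : dist t 1 < ε := by
      rw [Real.dist_eq, htd]
      have : |1 - u - 1| = u := by rw [show (1:ℝ) - u - 1 = -u by ring, abs_neg,
        abs_of_nonneg hu0.le]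
      rw [this]
      exact lt_of_le_of_lt (min_le_left _ _) (by linarith)
    exact this
  have hmem := hb htb
  refine ⟨⟨t, htI⟩, ht0, ht1, ?_⟩
  rwa [Set.mem_preimage, Set.projIcc_of_mem _ htI] at hmem

/-- Transfer lemma T1: pointwise weak dominance of `f` over `g` plus `g ≻ x`
implies `f ≻ x`. -/
lemma hp_T1 (hX : Convex ℝ X)
    (ax1 : PrefAx1 X R) (ax2 : PrefAx2 X R) (ax3 : PrefAx3 X R) (ax5 : PrefAx5 X R)
    {f g : S → V} (hf : IsAct X f) (hg : IsAct X g)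
    (hdom : ∀ s, ¬ R (constAct S (g s)) (constAct S (f s)))
    {x : V} (hx : x ∈ X) (hgx : R g (constAct S x)) :
    R f (constAct S x) := by
  have hxact := hp_constAct_isAct (X := X) (S := S) hx
  by_cases hy : ∃ y ∈ X, R (constAct S y) (constAct S x)
  · obtain ⟨y, hyX, hyx⟩ := hy
    -- continuity: pick x̃ strictly between, with g ≻ x̃ ≻ x
    have hopen := (ax2 (constAct S y) (constAct S x) g
      (hp_constAct_isAct hyX) hxact hg).2
    have h0mem : (⟨0, by norm_num⟩ : Set.Icc (0:ℝ) 1) ∈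
        {α : Set.Icc (0:ℝ) 1 | R g (mixAct (α:ℝ) (constAct S y) (constAct S x))} := by
      have he : mixAct ((0:ℝ)) (constAct S y) (constAct S x) = constAct S x := by
        funext s; show (0:ℝ) • y + (1-0:ℝ) • x = x; module
      show R g (mixAct ((0:ℝ)) (constAct S y) (constAct S x))
      rw [he]; exact hgx
    obtain ⟨t, ht0, ht1, htP⟩ := hp_icc_zero hopen h0mem
    have htP' : R g (constAct S ((t:ℝ) • y + (1-(t:ℝ)) • x)) := htP
    set xt := (t:ℝ) • y + (1-(t:ℝ)) • x with hxtd
    have hxtX : xt ∈ X := hX hyX hx ht0.le (by linarith) (by ring)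
    have hxtx : R (constAct S xt) (constAct S x) := by
      have h := hp_mixMono' hX ax1 ax3 hyX hx hx hx ht0 ht1 hyx (hp_irrefl ax1 hx)
      have e : (t:ℝ) • x + (1-(t:ℝ)) • x = x := by module
      rwa [e] at h
    -- the main chain with ε = 1/3
    have hFG : R (mixAct (2/3 : ℝ) f (constAct S xt)) (mixAct (2/3 : ℝ) g (constAct S x)) := by
      apply ax5 _ _ (hp_isAct_mix hX hf hxtX (by norm_num) (by norm_num))
        (hp_isAct_mix hX hg hx (by norm_num) (by norm_num))
      intro s
      exact hp_mixMono hX ax1 ax3 (hf.1 s) (hg.1 s) hxtX hx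
        (by norm_num : (0:ℝ) < 2/3) (by norm_num) (hdom s) hxtx
    have hGz : R (mixAct (2/3 : ℝ) g (constAct S x))
        (constAct S ((2/3 : ℝ) • xt + (1-(2/3 : ℝ)) • x)) :=
      (ax3 g (constAct S xt) hg (hp_constAct_isAct hxtX) x hx (2/3) (by norm_num)
        (by norm_num)).mp htP'
    have hzz' : R (constAct S ((2/3 : ℝ) • xt + (1-(2/3 : ℝ)) • x))
        (constAct S ((2/3 : ℝ) • x + (1-(2/3 : ℝ)) • xt)) :=
      hp_twoWeight hX ax1 ax3 hxtX hx hxtx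
    have hzX : (2/3 : ℝ) • xt + (1-(2/3 : ℝ)) • x ∈ X :=
      hX hxtX hx (by norm_num) (by norm_num) (by norm_num)
    have hz'X : (2/3 : ℝ) • x + (1-(2/3 : ℝ)) • xt ∈ X :=
      hX hx hxtX (by norm_num) (by norm_num) (by norm_num)
    have hFz : R (mixAct (2/3 : ℝ) f (constAct S xt))
        (constAct S ((2/3 : ℝ) • xt + (1-(2/3 : ℝ)) • x)) :=
      ax1.2.1 _ _ _ (hp_isAct_mix hX hf hxtX (by norm_num) (by norm_num))
        (hp_isAct_mix hX hg hx (by norm_num) (by norm_num))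
        (hp_constAct_isAct hzX) hFG hGz
    have hFz' : R (mixAct (2/3 : ℝ) f (constAct S xt))
        (constAct S ((2/3 : ℝ) • x + (1-(2/3 : ℝ)) • xt)) :=
      ax1.2.1 _ _ _ (hp_isAct_mix hX hf hxtX (by norm_num) (by norm_num))
        (hp_constAct_isAct hzX) (hp_constAct_isAct hz'X) hFz hzz'
    exact (ax3 f (constAct S x) hf hxact xt hxtX (2/3) (by norm_num) (by norm_num)).mpr hFz'
  · -- degenerate case: nothing strictly above x; contradiction from g ≻ x
    exfalso
    push_neg at hy
    obtain ⟨a, haX, b, hbX, hab⟩ := ax1.2.2.1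
    have hxb : R (constAct S x) (constAct S b) := by
      by_contra h
      exact hp_nt ax1 haX hx hbX (hy a haX) h hab
    -- pointwise: x ≻ α g(s) + (1-α) b for all α ∈ (0,1)
    have hpt : ∀ α : ℝ, 0 < α → α < 1 →
        R (constAct S x) (mixAct α g (constAct S b)) := by
      intro α hα0 hα1
      apply ax5 _ _ hxact (hp_isAct_mix hX hg hbX hα0.le hα1.le)
      intro s
      have h := hp_mixMono hX ax1 ax3 hx (hg.1 s) hx hbX hα0 hα1
        (hy (g s) (hg.1 s)) hxb
      have e : α • x + (1-α) • x = x := by module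
      rw [e] at h
      exact h
    have hopen := (ax2 g (constAct S b) (constAct S x) hg (hp_constAct_isAct hbX) hxact).1
    have h1mem : (⟨1, by norm_num⟩ : Set.Icc (0:ℝ) 1) ∈
        {α : Set.Icc (0:ℝ) 1 | R (mixAct (α:ℝ) g (constAct S b)) (constAct S x)} := by
      have he : mixAct ((1:ℝ)) g (constAct S b) = g := by
        funext s; show (1:ℝ) • g s + (1-1:ℝ) • b = g s; module
      show R (mixAct ((1:ℝ)) g (constAct S b)) (constAct S x)
      rw [he]; exact hgx
    obtain ⟨t, ht0, ht1, htP⟩ := hp_icc_one hopen h1mem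
    exact ax1.1 _ _ (hp_isAct_mix hX hg hbX ht0.le ht1.le) hxact htP (hpt _ ht0 ht1)

/-- Transfer lemma T2: pointwise weak dominance of `f` over `g` plus `x ≻ f`
implies `x ≻ g`. -/
lemma hp_T2 (hX : Convex ℝ X)
    (ax1 : PrefAx1 X R) (ax2 : PrefAx2 X R) (ax3 : PrefAx3 X R) (ax5 : PrefAx5 X R)
    {f g : S → V} (hf : IsAct X f) (hg : IsAct X g)
    (hdom : ∀ s, ¬ R (constAct S (g s)) (constAct S (f s)))
    {x : V} (hx : x ∈ X) (hxf : R (constAct S x) f) :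
    R (constAct S x) g := by
  have hxact := hp_constAct_isAct (X := X) (S := S) hx
  by_cases hw : ∃ w ∈ X, R (constAct S x) (constAct S w)
  · obtain ⟨w, hwX, hxw⟩ := hw
    have hopen := (ax2 (constAct S w) (constAct S x) f
      (hp_constAct_isAct hwX) hxact hf).1
    have h0mem : (⟨0, by norm_num⟩ : Set.Icc (0:ℝ) 1) ∈
        {α : Set.Icc (0:ℝ) 1 | R (mixAct (α:ℝ) (constAct S w) (constAct S x)) f} := by
      have he : mixAct ((0:ℝ)) (constAct S w) (constAct S x) = constAct S x := by
        funext s; show (0:ℝ) • w + (1-0:ℝ) • x = x; module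
      show R (mixAct ((0:ℝ)) (constAct S w) (constAct S x)) f
      rw [he]; exact hxf
    obtain ⟨t, ht0, ht1, htP⟩ := hp_icc_zero hopen h0mem
    have htP' : R (constAct S ((t:ℝ) • w + (1-(t:ℝ)) • x)) f := htP
    set xt := (t:ℝ) • w + (1-(t:ℝ)) • x with hxtd
    have hxtX : xt ∈ X := hX hwX hx ht0.le (by linarith) (by ring)
    have hxxt : R (constAct S x) (constAct S xt) := by
      have h := hp_mixMono hX ax1 ax3 hx hx hx hwX
        (by linarith : (0:ℝ) < 1 - (t:ℝ)) (by linarith) (hp_irrefl ax1 hx) hxw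
      have e1 : (1-(t:ℝ)) • x + (1-(1-(t:ℝ))) • x = x := by module
      have e2 : (1-(t:ℝ)) • x + (1-(1-(t:ℝ))) • w = xt := by rw [hxtd]; module
      rwa [e1, e2] at h
    -- main chain with ε = 1/3
    have hFG : R (mixAct (2/3 : ℝ) f (constAct S x)) (mixAct (2/3 : ℝ) g (constAct S xt)) := by
      apply ax5 _ _ (hp_isAct_mix hX hf hx (by norm_num) (by norm_num))
        (hp_isAct_mix hX hg hxtX (by norm_num) (by norm_num))
      intro s
      exact hp_mixMono hX ax1 ax3 (hf.1 s) (hg.1 s) hx hxtX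
        (by norm_num : (0:ℝ) < 2/3) (by norm_num) (hdom s) hxxt
    have hzF : R (constAct S ((2/3 : ℝ) • xt + (1-(2/3 : ℝ)) • x))
        (mixAct (2/3 : ℝ) f (constAct S x)) :=
      (ax3 (constAct S xt) f (hp_constAct_isAct hxtX) hf x hx (2/3) (by norm_num)
        (by norm_num)).mp htP'
    have hz'z : R (constAct S ((2/3 : ℝ) • x + (1-(2/3 : ℝ)) • xt))
        (constAct S ((2/3 : ℝ) • xt + (1-(2/3 : ℝ)) • x)) :=
      hp_twoWeight hX ax1 ax3 hx hxtX hxxt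
    have hzX : (2/3 : ℝ) • xt + (1-(2/3 : ℝ)) • x ∈ X :=
      hX hxtX hx (by norm_num) (by norm_num) (by norm_num)
    have hz'X : (2/3 : ℝ) • x + (1-(2/3 : ℝ)) • xt ∈ X :=
      hX hx hxtX (by norm_num) (by norm_num) (by norm_num)
    have hz'F : R (constAct S ((2/3 : ℝ) • x + (1-(2/3 : ℝ)) • xt))
        (mixAct (2/3 : ℝ) f (constAct S x)) :=
      ax1.2.1 _ _ _ (hp_constAct_isAct hz'X) (hp_constAct_isAct hzX)
        (hp_isAct_mix hX hf hx (by norm_num) (by norm_num)) hz'z hzF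
    have hz'G : R (constAct S ((2/3 : ℝ) • x + (1-(2/3 : ℝ)) • xt))
        (mixAct (2/3 : ℝ) g (constAct S xt)) :=
      ax1.2.1 _ _ _ (hp_constAct_isAct hz'X)
        (hp_isAct_mix hX hf hx (by norm_num) (by norm_num))
        (hp_isAct_mix hX hg hxtX (by norm_num) (by norm_num)) hz'F hFG
    exact (ax3 (constAct S x) g hxact hg xt hxtX (2/3) (by norm_num) (by norm_num)).mpr hz'G
  · -- degenerate case: nothing strictly below x; contradiction from x ≻ f
    exfalso
    push_neg at hw
    obtain ⟨a, haX, b, hbX, hab⟩ := ax1.2.2.1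
    have hax : R (constAct S a) (constAct S x) := by
      by_contra h
      exact hp_nt ax1 haX hx hbX h (hw b hbX) hab
    -- pointwise: α f(s) + (1-α) a ≻ x for all α ∈ (0,1)
    have hpt : ∀ α : ℝ, 0 < α → α < 1 →
        R (mixAct α f (constAct S a)) (constAct S x) := by
      intro α hα0 hα1
      apply ax5 _ _ (hp_isAct_mix hX hf haX hα0.le hα1.le) hxact
      intro s
      have h := hp_mixMono hX ax1 ax3 (hf.1 s) hx haX hx hα0 hα1
        (hw (f s) (hf.1 s)) hax
      have e : α • x + (1-α) • x = x := by module
      rw [e] at h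
      exact h
    have hopen := (ax2 f (constAct S a) (constAct S x) hf (hp_constAct_isAct haX) hxact).2
    have h1mem : (⟨1, by norm_num⟩ : Set.Icc (0:ℝ) 1) ∈
        {α : Set.Icc (0:ℝ) 1 | R (constAct S x) (mixAct (α:ℝ) f (constAct S a))} := by
      have he : mixAct ((1:ℝ)) f (constAct S a) = f := by
        funext s; show (1:ℝ) • f s + (1-1:ℝ) • a = f s; module
      show R (constAct S x) (mixAct ((1:ℝ)) f (constAct S a))
      rw [he]; exact hxf
    obtain ⟨t, ht0, ht1, htP⟩ := hp_icc_one hopen h1mem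
    exact ax1.1 _ _ (hp_isAct_mix hX hf haX ht0.le ht1.le) hxact (hpt _ ht0 ht1) htP

end AuxHP

section Statement

variable {S : Type*} [MeasurableSpace S] [Nonempty S]
variable {V : Type*} [AddCommGroup V] [Module ℝ V]

/-- Lemma 4: under Axioms 1, 2, 3 and 5, if
`f(s) ≿ g(s)` for all `s`, then for every outcome `x`: `x ⋈ f` implies
`¬ (g ≻ x)`, and `x ⋈ g` implies `¬ (x ≻ f)`. -/
theorem statement13 (X : Set V) (hX : Convex ℝ X) (hX2 : ∃ x ∈ X, ∃ y ∈ X, x ≠ y)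
    (R : (S → V) → (S → V) → Prop)
    (hax : PrefAx1 X R ∧ PrefAx2 X R ∧ PrefAx3 X R ∧ PrefAx5 X R)
    (f g : S → V) (hf : IsAct X f) (hg : IsAct X g)
    (hdom : ∀ s : S, ¬ R (constAct S (g s)) (constAct S (f s)))
    (x : V) (hx : x ∈ X) :
    (Incomp R (constAct S x) f → ¬ R g (constAct S x)) ∧
    (Incomp R (constAct S x) g → ¬ R (constAct S x) f) := by
  obtain ⟨ax1, ax2, ax3, ax5⟩ := hax
  constructor
  · intro hinc hgx
    exact hinc.2 (hp_T1 hX ax1 ax2 ax3 ax5 hf hg hdom hx hgx)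
  · intro hinc hxf
    exact hinc.1 (hp_T2 hX ax1 ax2 ax3 ax5 hf hg hdom hx hxf)

end Statement
end
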